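/- Let M be a maximum cardinality matching of a finite bipartite graph H and let x be a node of H. Then mm(H − {x}) = mm(H) − 1 if x is matched by M and there is no even-length alternating path for M starting at x; otherwise mm(H − {x}) = mm(H). -/

import Mathlib

open Finset

variable {α : Type*} [Fintype α] [DecidableEq α]

/-- `M` is a matching (set of pairwise node-disjoint edges) of the unweighted
graph with adjacency relation `adj`. -/
def IsUMatching (adj : α → α → Prop) (M : Finset (α × α)) : Prop :=
  (∀ e ∈ M, adj e.1 e.2) ∧ (∀ e ∈ M, e.1 ≠ e.2) ∧
  (∀ e ∈ M, ∀ f ∈ M, e ≠ f →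
    e.1 ≠ f.1 ∧ e.1 ≠ f.2 ∧ e.2 ≠ f.1 ∧ e.2 ≠ f.2)

open Classical in
/-- The maximum cardinality of a matching of the graph with adjacency `adj`. -/
noncomputable def mm (adj : α → α → Prop) : ℕ :=
  Finset.sup ((Finset.univ : Finset (α × α)).powerset.filter fun M => IsUMatching adj M)
    Finset.card

/-- The (undirected) edge `ab` belongs to the matching `M`. -/
def inMatch (M : Finset (α × α)) (a b : α) : Prop :=
  (a, b) ∈ M ∨ (b, a) ∈ M

/-- The node `a` is matched by the matching `M`. -/
def matchedBy (M : Finset (α × α)) (a : α) : Prop :=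
  ∃ e ∈ M, e.1 = a ∨ e.2 = a

/-- `p` is an alternating path for the matching `M`: a nonempty simple path whose
edges alternate between `M` and its complement (edge `i` is in `M` iff
`i % 2 = r` for a fixed phase `r`), and which contains the matched edge of each
of its endpoints that is matched by `M`.  A zero-length path consists of a
single unmatched node. -/
def IsAltPath (adj : α → α → Prop) (M : Finset (α × α)) (p : List α) : Prop :=
  p ≠ [] ∧ p.Nodup ∧ List.Chain' adj p ∧
  ∃ r : ℕ,
    (∀ i, ∀ h : i + 1 < p.length,
      (inMatch M (p.get ⟨i, Nat.lt_of_succ_lt h⟩) (p.get ⟨i + 1, h⟩) ↔ i % 2 = r)) ∧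
    (∀ h : p ≠ [], matchedBy M (p.head h) → 1 < p.length ∧ r = 0) ∧
    (∀ h : p ≠ [], matchedBy M (p.getLast h) → 1 < p.length ∧ (p.length - 2) % 2 = r)

/-- There is an even-length (possibly zero-length) alternating path for `M`
starting at `a`. -/
def EvenAltFrom (adj : α → α → Prop) (M : Finset (α × α)) (a : α) : Prop :=
  ∃ p : List α, IsAltPath adj M p ∧ p.length % 2 = 1 ∧ ∃ h : p ≠ [], p.head h = a

/-! Deleting `x` loses at most the edge of `M` at `x`. If `x` is unmatched, `M` survives in
`H - x`; if an even alternating path starts at `x`, switching `M` along it frees `x` at no cost.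
Conversely, let `N` be a matching of `H - x` and follow from `x` a longest path whose edges lie
alternately in `M \ N` and `N \ M`. By maximality its last vertex is unmatched by the matching its
next edge would come from. With an even number of edges, the path is an even alternating path for
`M` from `x`; with an odd number, it is augmenting for `N`, so `|N| < |M|`. -/

section Matching

variable {V : Type*} {adj : V → V → Prop} {M N : Finset (V × V)} {a b c x : V}

theorem inMatch_comm : inMatch M a b ↔ inMatch M b a := Or.comm

theorem matchedBy_iff_exists_inMatch : matchedBy M a ↔ ∃ b, inMatch M a b := by
  constructor
  · rintro ⟨⟨u, w⟩, he, rfl | rfl⟩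
    exacts [⟨w, .inl he⟩, ⟨u, .inr he⟩]
  · rintro ⟨b, h | h⟩
    exacts [⟨_, h, .inl rfl⟩, ⟨_, h, .inr rfl⟩]

theorem matchedBy_of_inMatch (h : inMatch M a b) : matchedBy M a :=
  matchedBy_iff_exists_inMatch.2 ⟨b, h⟩

namespace IsUMatching

theorem mono (hM : IsUMatching adj M) (hNM : N ⊆ M) : IsUMatching adj N :=
  ⟨fun e he => hM.1 e (hNM he), fun e he => hM.2.1 e (hNM he),
    fun e he f hf => hM.2.2 e (hNM he) f (hNM hf)⟩

theorem eq_of_incident (hM : IsUMatching adj M) {e f : V × V} (he : e ∈ M) (hf : f ∈ M)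
    (hae : e.1 = a ∨ e.2 = a) (haf : f.1 = a ∨ f.2 = a) : e = f := by
  by_contra hne
  have := hM.2.2 e he f hf hne
  rcases hae with rfl | rfl <;> rcases haf with h | h <;> simp_all

theorem ne_of_inMatch (hM : IsUMatching adj M) (h : inMatch M a b) : a ≠ b := by
  rcases h with h | h
  exacts [hM.2.1 _ h, (hM.2.1 _ h).symm]

theorem adj_of_inMatch (hM : IsUMatching adj M) (hsymm : ∀ a b, adj a b → adj b a)
    (h : inMatch M a b) : adj a b := by
  rcases h with h | h
  exacts [hM.1 _ h, hsymm _ _ (hM.1 _ h)]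

theorem sym2_eq_of_inMatch (hM : IsUMatching adj M) (h : inMatch M a b) {e : V × V}
    (he : e ∈ M) (hae : e.1 = a ∨ e.2 = a) : s(e.1, e.2) = s(a, b) := by
  rcases h with h | h
  · rw [hM.eq_of_incident he h hae (.inl rfl)]
  · rw [hM.eq_of_incident he h hae (.inr rfl), Sym2.eq_swap]

theorem inMatch_unique (hM : IsUMatching adj M) (hb : inMatch M a b) (hc : inMatch M a c) :
    b = c := by
  have hab := hM.ne_of_inMatch hb
  rcases hc with hc | hc
  · have := hM.sym2_eq_of_inMatch hb hc (.inl rfl)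
    simp_all
  · have := hM.sym2_eq_of_inMatch hb hc (.inr rfl)
    simp_all

theorem injOn_sym2 (hM : IsUMatching adj M) :
    Set.InjOn (fun e : V × V => s(e.1, e.2)) (M : Set (V × V)) := by
  rintro ⟨a, b⟩ he ⟨c, d⟩ hf hef
  refine hM.eq_of_incident he hf (a := a) (.inl rfl) ?_
  rcases Sym2.eq_iff.1 hef with h | h
  exacts [.inl h.1.symm, .inr h.1.symm]

end IsUMatching

theorem isUMatching_delete_iff :
    IsUMatching (fun a b => adj a b ∧ a ≠ x ∧ b ≠ x) M ↔ IsUMatching adj M ∧ ¬ matchedBy M x := by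
  constructor
  · intro hM
    refine ⟨⟨fun e he => (hM.1 e he).1, hM.2.1, hM.2.2⟩, ?_⟩
    rintro ⟨e, he, hx | hx⟩
    exacts [(hM.1 e he).2.1 hx, (hM.1 e he).2.2 hx]
  · rintro ⟨hM, hx⟩
    exact ⟨fun e he => ⟨hM.1 e he, fun h => hx ⟨e, he, .inl h⟩, fun h => hx ⟨e, he, .inr h⟩⟩,
      hM.2.1, hM.2.2⟩

theorem card_le_mm [Fintype V] (hM : IsUMatching adj M) : #M ≤ mm adj := by
  classical
  exact Finset.le_sup (f := Finset.card) (by simpa using hM)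

theorem mm_le [Fintype V] {c : ℕ} (h : ∀ N, IsUMatching adj N → #N ≤ c) : mm adj ≤ c := by
  classical
  exact Finset.sup_le fun N hN => h N (by simpa using hN)

theorem mm_delete_le [Fintype V] : mm (fun a b => adj a b ∧ a ≠ x ∧ b ≠ x) ≤ mm adj :=
  mm_le fun _ hN => card_le_mm (isUMatching_delete_iff.1 hN).1

theorem card_le_mm_delete_add_one [Fintype V] [DecidableEq V] (hM : IsUMatching adj M) :
    #M ≤ mm (fun a b => adj a b ∧ a ≠ x ∧ b ≠ x) + 1 := by
  by_cases hx : matchedBy M x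
  · obtain ⟨e, he, hxe⟩ := hx
    have hrest : ¬ matchedBy (M.erase e) x := fun ⟨f, hf, hxf⟩ =>
      (mem_erase.1 hf).1 (hM.eq_of_incident (mem_erase.1 hf).2 he hxf hxe)
    have := card_le_mm (isUMatching_delete_iff.2 ⟨hM.mono (erase_subset e M), hrest⟩)
    rw [card_erase_of_mem he] at this
    omega
  · exact (card_le_mm (isUMatching_delete_iff.2 ⟨hM, hx⟩)).trans (Nat.le_succ _)

end Matching

theorem card_filter_range_mod_two {s : ℕ} (n : ℕ) (hs : s < 2) :
    #{i ∈ range n | i % 2 = s} = (n + 1 - s) / 2 := by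
  have := Nat.count_modEq_card n two_pos s
  simp only [Nat.ModEq, Nat.mod_eq_of_lt hs, Nat.count_eq_card_filter_range] at this
  rw [this]
  split_ifs <;> omega

theorem card_filter_range_mod_two_ne {s : ℕ} (n : ℕ) (hs : s < 2) :
    #{i ∈ range n | i % 2 ≠ s} = (n + s) / 2 := by
  have := card_filter_add_card_filter_not (s := range n) (fun i => i % 2 = s)
  rw [card_filter_range_mod_two n hs, card_range] at this
  simp only [ne_eq]
  omega

section Toggle

variable {V : Type*} {adj : V → V → Prop} {N : Finset (V × V)}
  {v : ℕ → V} {L t : ℕ}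

theorem exists_pathEdge_of_incident (hN : IsUMatching adj N)
    (hpath : ∀ i, i + 1 < L → i % 2 ≠ t → inMatch N (v i) (v (i + 1)))
    (hfirst : t = 0 → ¬ matchedBy N (v 0)) (hlast : ¬ matchedBy N (v (L - 1)))
    {e : V × V} (he : e ∈ N) {j : ℕ} (hj : j < L) (hej : e.1 = v j ∨ e.2 = v j) :
    ∃ i, i + 1 < L ∧ i % 2 ≠ t ∧ s(v i, v (i + 1)) = s(e.1, e.2) := by
  have hjL : j + 1 < L := by
    by_contra
    obtain rfl : j = L - 1 := by omega
    exact hlast ⟨e, he, hej⟩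
  by_cases hjt : j % 2 = t
  · have hj0 : j ≠ 0 := by
      rintro rfl
      exact hfirst (by simpa using hjt.symm) ⟨e, he, hej⟩
    have hedge := hpath (j - 1) (by omega) (by omega)
    rw [Nat.sub_add_cancel (by omega), inMatch_comm] at hedge
    refine ⟨j - 1, by omega, by omega, ?_⟩
    rw [Nat.sub_add_cancel (by omega), Sym2.eq_swap, hN.sym2_eq_of_inMatch hedge he hej]
  · exact ⟨j, hjL, hjt, (hN.sym2_eq_of_inMatch (hpath j hjL hjt) he hej).symm⟩

variable [DecidableEq V]

/-- When the edges of `N` meeting the path `v 0, …, v (L - 1)` are its edges of index parity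
`≠ t`, this is the symmetric difference of `N` and the path. -/
def toggle (N : Finset (V × V)) (v : ℕ → V) (L t : ℕ) : Finset (V × V) :=
  {e ∈ N | ∀ j < L, e.1 ≠ v j ∧ e.2 ≠ v j} ∪
    {i ∈ range (L - 1) | i % 2 = t}.image fun i => (v i, v (i + 1))

theorem mem_toggle {e : V × V} :
    e ∈ toggle N v L t ↔ (e ∈ N ∧ ∀ j < L, e.1 ≠ v j ∧ e.2 ≠ v j) ∨
      ∃ i, i + 1 < L ∧ i % 2 = t ∧ (v i, v (i + 1)) = e := by
  simp only [toggle, mem_union, mem_filter, mem_image, mem_range]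
  exact or_congr Iff.rfl ⟨fun ⟨i, ⟨hi, ht⟩, h⟩ => ⟨i, by omega, ht, h⟩,
    fun ⟨i, hi, ht, h⟩ => ⟨i, ⟨by omega, ht⟩, h⟩⟩

theorem isUMatching_toggle (hN : IsUMatching adj N) (hv : Set.InjOn v (Set.Iio L))
    (hadj : ∀ i, i + 1 < L → i % 2 = t → adj (v i) (v (i + 1))) :
    IsUMatching adj (toggle N v L t) := by
  have hne : ∀ a b, a < L → b < L → a ≠ b → v a ≠ v b := fun a b ha hb hab h => hab (hv ha hb h)
  refine ⟨fun e he => ?_, fun e he => ?_, fun e he f hf hef => ?_⟩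
  · rcases mem_toggle.1 he with ⟨he, -⟩ | ⟨i, hi, ht, rfl⟩
    exacts [hN.1 e he, hadj i hi ht]
  · rcases mem_toggle.1 he with ⟨he, -⟩ | ⟨i, hi, -, rfl⟩
    exacts [hN.2.1 e he, hne i (i + 1) (by omega) hi (by omega)]
  · rcases mem_toggle.1 he with ⟨he, hea⟩ | ⟨i, hi, hit, rfl⟩ <;>
      rcases mem_toggle.1 hf with ⟨hf, hfa⟩ | ⟨j, hj, hjt, rfl⟩
    · exact hN.2.2 e he f hf hef
    · exact ⟨(hea j (by omega)).1, (hea (j + 1) hj).1, (hea j (by omega)).2, (hea (j + 1) hj).2⟩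
    · exact ⟨((hfa i (by omega)).1).symm, ((hfa i (by omega)).2).symm,
        ((hfa (i + 1) hi).1).symm, ((hfa (i + 1) hi).2).symm⟩
    · have hij : i ≠ j := by rintro rfl; exact hef rfl
      exact ⟨hne _ _ (by omega) (by omega) hij, hne _ _ (by omega) hj (by omega),
        hne _ _ hi (by omega) (by omega), hne _ _ hi hj (by omega)⟩

theorem not_matchedBy_toggle_zero (hv : Set.InjOn v (Set.Iio L)) (hL : L ≠ 0) (ht : t ≠ 0) :
    ¬ matchedBy (toggle N v L t) (v 0) := by
  rintro ⟨e, he, he0⟩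
  rcases mem_toggle.1 he with ⟨-, havoid⟩ | ⟨i, hi, hit, rfl⟩
  · rcases he0 with h | h
    exacts [(havoid 0 (by omega)).1 h, (havoid 0 (by omega)).2 h]
  · rcases he0 with h | h
    · have := hv (show i < L by omega) (show 0 < L by omega) h
      omega
    · have := hv (show i + 1 < L by omega) (show 0 < L by omega) h
      omega

theorem card_add_le_card_toggle (hN : IsUMatching adj N) (hv : Set.InjOn v (Set.Iio L))
    (hpath : ∀ i, i + 1 < L → i % 2 ≠ t → inMatch N (v i) (v (i + 1)))
    (hfirst : t = 0 → ¬ matchedBy N (v 0)) (hlast : ¬ matchedBy N (v (L - 1))) :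
    #N + #{i ∈ range (L - 1) | i % 2 = t} ≤
      #(toggle N v L t) + #{i ∈ range (L - 1) | i % 2 ≠ t} := by
  have hsplit := card_filter_add_card_filter_not (s := N) (fun e => ∀ j < L, e.1 ≠ v j ∧ e.2 ≠ v j)
  set kept := {e ∈ N | ∀ j < L, e.1 ≠ v j ∧ e.2 ≠ v j}
  set added := {i ∈ range (L - 1) | i % 2 = t}.image fun i => (v i, v (i + 1))
  have hdisj : Disjoint kept added := by
    refine disjoint_left.2 fun e hek hea => ?_
    obtain ⟨i, hi, -, rfl⟩ := mem_image.1 hea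
    exact ((mem_filter.1 hek).2 i (by simp at hi; omega)).1 rfl
  have hadded : #added = #{i ∈ range (L - 1) | i % 2 = t} := by
    refine card_image_of_injOn fun i hi j hj hij => hv ?_ ?_ (congrArg Prod.fst hij)
    · simp at hi; exact (show i < L by omega)
    · simp at hj; exact (show j < L by omega)
  have hdropped : #{e ∈ N | ¬ ∀ j < L, e.1 ≠ v j ∧ e.2 ≠ v j} ≤
      #{i ∈ range (L - 1) | i % 2 ≠ t} := by
    refine (card_le_card_of_injOn (fun e : V × V => s(e.1, e.2)) (t :=
      {i ∈ range (L - 1) | i % 2 ≠ t}.image fun i => s(v i, v (i + 1))) ?_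
      (hN.injOn_sym2.mono (filter_subset _ _))).trans card_image_le
    intro e he
    simp only [coe_filter, Set.mem_ofPred_eq, not_forall, not_and_or, not_not] at he
    obtain ⟨he, j, hj, hej⟩ := he
    obtain ⟨i, hi, hit, hie⟩ := exists_pathEdge_of_incident hN hpath hfirst hlast he hj hej
    simp only [coe_image, coe_filter, mem_range, Set.mem_image, Set.mem_ofPred_eq]
    exact ⟨i, ⟨by omega, hit⟩, hie⟩
  rw [toggle, card_union_of_disjoint hdisj, hadded]
  omega

end Toggle

section AltWalk

variable {V : Type*} {adj : V → V → Prop} {M N : Finset (V × V)} {x : V} {n : ℕ} {v : ℕ → V}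

def altMatching (M N : Finset (V × V)) (i : ℕ) : Finset (V × V) := if i % 2 = 0 then M else N

theorem altMatching_congr {i j : ℕ} (h : i % 2 = j % 2) :
    altMatching M N i = altMatching M N j := by
  simp only [altMatching, h]

theorem altMatching_of_mod_two_eq_zero {i : ℕ} (h : i % 2 = 0) : altMatching M N i = M := by
  simp [altMatching, h]

theorem altMatching_of_mod_two_eq_one {i : ℕ} (h : i % 2 = 1) : altMatching M N i = N := by
  simp [altMatching, h]

theorem IsUMatching.altMatching (hM : IsUMatching adj M) (hN : IsUMatching adj N) (i : ℕ) :
    IsUMatching adj (altMatching M N i) := by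
  unfold _root_.altMatching
  split_ifs
  exacts [hM, hN]

def IsAltWalk (M N : Finset (V × V)) (x : V) (n : ℕ) (v : ℕ → V) : Prop :=
  v 0 = x ∧ Set.InjOn v (Set.Iio n) ∧
    ∀ i, i + 1 < n → inMatch (altMatching M N i) (v i) (v (i + 1)) ∧
      ¬ inMatch (altMatching M N (i + 1)) (v i) (v (i + 1))

namespace IsAltWalk

theorem length_le_card [Fintype V] (hW : IsAltWalk M N x n v) : n ≤ Fintype.card V := by
  have := card_le_card_of_injOn v (s := range n) (t := univ) (fun _ _ => mem_coe.2 (mem_univ _))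
    (by rw [coe_range]; exact hW.2.1)
  simpa using this

theorem eq_succ_of_inMatch (hM : IsUMatching adj M) (hN : IsUMatching adj N)
    (hW : IsAltWalk M N x n v) {j : ℕ} (hj : j + 1 < n) {w : V}
    (h : inMatch (altMatching M N j) (v j) w) : w = v (j + 1) :=
  (hM.altMatching hN j).inMatch_unique h (hW.2.2 j hj).1

theorem eq_pred_of_inMatch (hM : IsUMatching adj M) (hN : IsUMatching adj N)
    (hW : IsAltWalk M N x n v) {j : ℕ} (hj0 : j ≠ 0) (hj : j < n) {w : V}
    (h : inMatch (altMatching M N (j + 1)) (v j) w) : w = v (j - 1) := by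
  have hedge := (hW.2.2 (j - 1) (by omega)).1
  rw [Nat.sub_add_cancel (by omega), inMatch_comm,
    altMatching_congr (show (j - 1) % 2 = (j + 1) % 2 by omega)] at hedge
  exact (hM.altMatching hN _).inMatch_unique h hedge

theorem ne_of_inMatch_last (hM : IsUMatching adj M) (hN : IsUMatching adj N)
    (hxN : ¬ matchedBy N x) (hW : IsAltWalk M N x n v) {w : V}
    (hw : inMatch (altMatching M N (n - 1)) (v (n - 1)) w) {j : ℕ} (hj : j < n) : w ≠ v j := by
  rintro rfl
  rw [inMatch_comm] at hw
  by_cases hpar : j % 2 = (n - 1) % 2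
  · have hjn : j ≠ n - 1 := fun h => (hM.altMatching hN _).ne_of_inMatch hw (by rw [h])
    rw [← altMatching_congr hpar] at hw
    have := hW.2.1 (show n - 1 < n by omega) (show j + 1 < n by omega)
      (hW.eq_succ_of_inMatch hM hN (by omega) hw)
    omega
  · have hj0 : j ≠ 0 := by
      rintro rfl
      rw [altMatching_of_mod_two_eq_one (by omega), hW.1] at hw
      exact hxN (matchedBy_of_inMatch hw)
    rw [altMatching_congr (show (n - 1) % 2 = (j + 1) % 2 by omega)] at hw
    have := hW.2.1 (show n - 1 < n by omega) (show j - 1 < n by omega)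
      (hW.eq_pred_of_inMatch hM hN hj0 hj hw)
    omega

theorem not_inMatch_succ_of_inMatch_last (hM : IsUMatching adj M) (hN : IsUMatching adj N)
    (hxN : ¬ matchedBy N x) (hW : IsAltWalk M N x n v) (hn : n ≠ 0) {w : V}
    (hw : inMatch (altMatching M N (n - 1)) (v (n - 1)) w) :
    ¬ inMatch (altMatching M N n) (v (n - 1)) w := by
  intro h
  by_cases hn1 : n = 1
  · subst hn1
    rw [altMatching_of_mod_two_eq_one rfl, Nat.sub_self, hW.1] at h
    exact hxN (matchedBy_of_inMatch h)
  · rw [altMatching_congr (show n % 2 = (n - 1 + 1) % 2 by omega)] at h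
    have hprev := (hW.2.2 (n - 2) (by omega)).2
    rw [show n - 2 + 1 = n - 1 by omega, inMatch_comm] at hprev
    rw [hW.eq_pred_of_inMatch hM hN (by omega) (by omega) h, show n - 1 - 1 = n - 2 by omega]
      at hw
    exact hprev hw

theorem extend (hM : IsUMatching adj M) (hN : IsUMatching adj N) (hxN : ¬ matchedBy N x)
    (hW : IsAltWalk M N x n v) (hn : n ≠ 0) {w : V}
    (hw : inMatch (altMatching M N (n - 1)) (v (n - 1)) w) :
    IsAltWalk M N x (n + 1) (Function.update v n w) := by
  have hfresh := fun j (hj : j < n) => hW.ne_of_inMatch_last hM hN hxN hw hj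
  refine ⟨by rw [Function.update_of_ne (by omega)]; exact hW.1, ?_, fun i hi => ?_⟩
  · intro i hi j hj hij
    simp only [Set.mem_Iio] at hi hj
    rcases Nat.lt_succ_iff_lt_or_eq.1 hi with hi | rfl <;>
      rcases Nat.lt_succ_iff_lt_or_eq.1 hj with hj | rfl
    · rw [Function.update_of_ne (by omega), Function.update_of_ne (by omega)] at hij
      exact hW.2.1 hi hj hij
    · rw [Function.update_of_ne (by omega), Function.update_self] at hij
      exact absurd hij.symm (hfresh i hi)
    · rw [Function.update_self, Function.update_of_ne (by omega)] at hij
      exact absurd hij (hfresh j hj)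
    · rfl
  · rcases Nat.lt_succ_iff_lt_or_eq.1 hi with hi | hi
    · rw [Function.update_of_ne (by omega), Function.update_of_ne (by omega)]
      exact hW.2.2 i hi
    · obtain rfl : i = n - 1 := by omega
      rw [Function.update_of_ne (by omega), hi, Function.update_self]
      exact ⟨hw, hW.not_inMatch_succ_of_inMatch_last hM hN hxN hn hw⟩

theorem not_matchedBy_last (hM : IsUMatching adj M) (hN : IsUMatching adj N)
    (hxN : ¬ matchedBy N x) (hW : IsAltWalk M N x n v) (hn : n ≠ 0)
    (hmax : ∀ m w, IsAltWalk M N x m w → m ≤ n) :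
    ¬ matchedBy (altMatching M N (n - 1)) (v (n - 1)) := fun h => by
  obtain ⟨w, hw⟩ := matchedBy_iff_exists_inMatch.1 h
  have := hmax _ _ (hW.extend hM hN hxN hn hw)
  omega

theorem evenAltFrom (hsymm : ∀ a b, adj a b → adj b a) (hM : IsUMatching adj M)
    (hN : IsUMatching adj N) (hW : IsAltWalk M N x n v) (hodd : n % 2 = 1)
    (hlast : ¬ matchedBy M (v (n - 1))) : EvenAltFrom adj M x := by
  set p := (List.range n).map v
  have hlen : p.length = n := by simp [p]
  have hne : p ≠ [] := by rw [← List.length_pos_iff]; omega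
  have hget : ∀ i (h : i < p.length), p[i] = v i := by simp [p]
  have hhead : p.head hne = x := by rw [List.head_eq_getElem_zero, hget]; exact hW.1
  have hinM : ∀ i, i + 1 < n → (inMatch M (v i) (v (i + 1)) ↔ i % 2 = 0) := by
    intro i hi
    obtain ⟨h1, h2⟩ := hW.2.2 i hi
    by_cases hpar : i % 2 = 0
    · simp only [altMatching, hpar, if_true] at h1
      exact iff_of_true h1 hpar
    · simp only [altMatching, show (i + 1) % 2 = 0 by omega, if_true] at h2
      exact iff_of_false h2 hpar
  refine ⟨p, ⟨hne, ?_, ?_, 0, fun i hi => ?_, fun _ hm => ⟨?_, rfl⟩, fun _ hm => ?_⟩,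
    by omega, hne, hhead⟩
  · exact List.Nodup.map_on (fun a ha b hb => hW.2.1 (List.mem_range.1 ha) (List.mem_range.1 hb))
      List.nodup_range
  · refine List.isChain_iff_getElem.2 fun i hi => ?_
    rw [hget, hget]
    exact (hM.altMatching hN i).adj_of_inMatch hsymm (hW.2.2 i (by omega)).1
  · simp only [List.get_eq_getElem, hget]
    exact hinM i (by omega)
  · by_contra hn1
    rw [hhead, ← hW.1, show 0 = n - 1 by omega] at hm
    exact hlast hm
  · rw [List.getLast_eq_getElem, hget, hlen] at hm
    exact absurd hm hlast

end IsAltWalk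

theorem exists_maximal_isAltWalk [Fintype V] (M N : Finset (V × V)) (x : V) :
    ∃ n v, n ≠ 0 ∧ IsAltWalk M N x n v ∧ ∀ m w, IsAltWalk M N x m w → m ≤ n := by
  classical
  let P n := ∃ v, IsAltWalk M N x n v
  have hP1 : P 1 := ⟨fun _ => x, rfl, fun i hi j hj _ => by simp_all, fun i hi => by omega⟩
  have hbound : ∀ n, P n → n ≤ Fintype.card V := fun n ⟨_, hW⟩ => hW.length_le_card
  have hmax : ∀ m, P m → m ≤ Nat.findGreatest P (Fintype.card V) :=
    fun m hm => Nat.le_findGreatest (hbound m hm) hm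
  obtain ⟨v, hW⟩ := Nat.findGreatest_spec (hbound 1 hP1) hP1
  exact ⟨_, v, by have := hmax 1 hP1; omega, hW, fun m w hw => hmax m ⟨w, hw⟩⟩

end AltWalk

section DeleteNode

variable {V : Type*} [DecidableEq V] {adj : V → V → Prop} {M : Finset (V × V)} {x : V}

theorem exists_isUMatching_not_matchedBy_of_evenAltFrom (hM : IsUMatching adj M)
    (hx : matchedBy M x) (hev : EvenAltFrom adj M x) :
    ∃ N, IsUMatching adj N ∧ ¬ matchedBy N x ∧ #M ≤ #N := by
  obtain ⟨p, ⟨-, hnd, hch, r, halt, hhead, hlast⟩, hodd, hne, rfl⟩ := hev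
  obtain ⟨hL, rfl⟩ := hhead hne hx
  set L := p.length
  set v : ℕ → V := fun i => p.getD i (p.head hne)
  have hv : ∀ i (h : i < L), v i = p[i] := fun i h => List.getD_eq_getElem p _ h
  have hinj : Set.InjOn v (Set.Iio L) := fun i hi j hj hij => by
    rw [hv i hi, hv j hj] at hij
    exact hnd.getElem_inj_iff.1 hij
  have hv0 : v 0 = p.head hne := by rw [hv 0 (by omega), List.head_eq_getElem_zero]
  have hpath : ∀ i, i + 1 < L → i % 2 ≠ 1 → inMatch M (v i) (v (i + 1)) := fun i hi hi1 => by
    rw [hv i (by omega), hv (i + 1) hi]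
    exact (halt i hi).2 (by omega)
  have hlastv : ¬ matchedBy M (v (L - 1)) := fun h => by
    have := (hlast hne (by rwa [List.getLast_eq_getElem, ← hv])).2
    omega
  have hcard := card_add_le_card_toggle hM hinj hpath (by omega) hlastv
  rw [card_filter_range_mod_two _ (by norm_num), card_filter_range_mod_two_ne _ (by norm_num)]
    at hcard
  refine ⟨toggle M v L 1, isUMatching_toggle hM hinj fun i hi _ => ?_,
    hv0 ▸ not_matchedBy_toggle_zero hinj (by omega) one_ne_zero, by omega⟩
  rw [hv i (by omega), hv (i + 1) hi]
  exact List.isChain_iff_getElem.1 hch i hi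

theorem card_add_one_le_of_not_evenAltFrom [Fintype V] (hsymm : ∀ a b, adj a b → adj b a)
    (hM : IsUMatching adj M) (hMmax : ∀ M', IsUMatching adj M' → #M' ≤ #M)
    (hno : ¬ EvenAltFrom adj M x) {N : Finset (V × V)} (hN : IsUMatching adj N)
    (hxN : ¬ matchedBy N x) : #N + 1 ≤ #M := by
  obtain ⟨n, v, hn, hW, hmax⟩ := exists_maximal_isAltWalk M N x
  have hlast := hW.not_matchedBy_last hM hN hxN hn hmax
  by_cases hodd : n % 2 = 1
  · rw [altMatching_of_mod_two_eq_zero (by omega)] at hlast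
    exact absurd (hW.evenAltFrom hsymm hM hN hodd hlast) hno
  rw [altMatching_of_mod_two_eq_one (by omega)] at hlast
  have hadj : ∀ i, i + 1 < n → i % 2 = 0 → adj (v i) (v (i + 1)) := fun i hi h => by
    have hedge := (hW.2.2 i hi).1
    rw [altMatching_of_mod_two_eq_zero h] at hedge
    exact hM.adj_of_inMatch hsymm hedge
  have hpath : ∀ i, i + 1 < n → i % 2 ≠ 0 → inMatch N (v i) (v (i + 1)) := fun i hi h => by
    have hedge := (hW.2.2 i hi).1
    rwa [altMatching_of_mod_two_eq_one (by omega)] at hedge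
  have hcard := card_add_le_card_toggle hN hW.2.1 hpath (fun _ => hW.1 ▸ hxN) hlast
  rw [card_filter_range_mod_two _ (by norm_num), card_filter_range_mod_two_ne _ (by norm_num)]
    at hcard
  have := hMmax _ (isUMatching_toggle hN hW.2.1 hadj)
  omega

end DeleteNode

theorem mm_delete_single_node_general
    (adj : α → α → Prop) (hsymm : ∀ a b, adj a b → adj b a)
    (M : Finset (α × α)) (hM : IsUMatching adj M)
    (hMmax : ∀ M' : Finset (α × α), IsUMatching adj M' → M'.card ≤ M.card)
    (x : α) :
    (matchedBy M x ∧ ¬ EvenAltFrom adj M x →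
      mm (fun a b => adj a b ∧ a ≠ x ∧ b ≠ x) = mm adj - 1) ∧
    (¬ (matchedBy M x ∧ ¬ EvenAltFrom adj M x) →
      mm (fun a b => adj a b ∧ a ≠ x ∧ b ≠ x) = mm adj) := by
  have hmm : mm adj = #M := le_antisymm (mm_le hMmax) (card_le_mm hM)
  refine ⟨fun ⟨_, hno⟩ => ?_, fun h => le_antisymm mm_delete_le ?_⟩
  · have hdrop : mm (fun a b => adj a b ∧ a ≠ x ∧ b ≠ x) ≤ #M - 1 := mm_le fun N hN => by
      have := card_add_one_le_of_not_evenAltFrom hsymm hM hMmax hno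
        (isUMatching_delete_iff.1 hN).1 (isUMatching_delete_iff.1 hN).2
      omega
    have := card_le_mm_delete_add_one (x := x) hM
    omega
  · rw [hmm]
    by_cases hx : matchedBy M x
    · obtain ⟨N, hN, hxN, hMN⟩ :=
        exists_isUMatching_not_matchedBy_of_evenAltFrom hM hx (not_not.1 fun hno => h ⟨hx, hno⟩)
      exact hMN.trans (card_le_mm (isUMatching_delete_iff.2 ⟨hN, hxN⟩))
    · exact card_le_mm (isUMatching_delete_iff.2 ⟨hM, hx⟩)

/-- Deleting a single node `x` from a bipartite graph: the maximum matching
cardinality drops by 1 exactly when `x` is matched by a maximum matching `M`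
and no even-length alternating path for `M` starts at `x`; otherwise it is
unchanged. -/
theorem mm_delete_single_node
    (A B : Finset α) (hAB : Disjoint A B)
    (adj : α → α → Prop) (hsymm : ∀ a b, adj a b → adj b a)
    (hbip : ∀ a b, adj a b → (a ∈ A ∧ b ∈ B) ∨ (a ∈ B ∧ b ∈ A))
    (M : Finset (α × α)) (hM : IsUMatching adj M)
    (hMmax : ∀ M' : Finset (α × α), IsUMatching adj M' → M'.card ≤ M.card)
    (x : α) :
    (matchedBy M x ∧ ¬ EvenAltFrom adj M x →
      mm (fun a b => adj a b ∧ a ≠ x ∧ b ≠ x) = mm adj - 1) ∧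
    (¬ (matchedBy M x ∧ ¬ EvenAltFrom adj M x) →
      mm (fun a b => adj a b ∧ a ≠ x ∧ b ≠ x) = mm adj) :=
  mm_delete_single_node_general adj hsymm M hM hMmax x
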